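/- Under the assumptions of the multi-formation proposition, the optimum S* = argmin_{S ∈ ℝ^{n×m}} D(S, T) (if it exists) can be chosen with all its points lying in the subspace N; more precisely, there exists a minimizer of D(·, T) over datasets of size n all of whose points lie in N. -/

import Mathlib

open scoped Classical

/-- A dataset distance measure on finite datasets (multisets of points) in ℝ^m. -/
structure IsDatasetDistance {m : ℕ}
    (D : Multiset (EuclideanSpace ℝ (Fin m)) → Multiset (EuclideanSpace ℝ (Fin m)) → ℝ) : Prop where
  nonneg : ∀ X X', 0 ≤ D X X'
  refl : ∀ X, D X X = 0
  symm : ∀ X X', D X X' = D X' X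
  replace : ∀ X X' (d' d : EuclideanSpace ℝ (Fin m)), d' ∈ X →
    (∀ x ∈ X', ‖d - x‖ ≤ ‖d' - x‖) → D (d ::ₘ X.erase d') X' ≤ D X X'
  adjoin : ∀ X X' (d : EuclideanSpace ℝ (Fin m)), d ∈ X → D X (d ::ₘ X') ≤ D X X'

/-- View a size-`k` dataset (an element of ℝ^{k×m}) as a multiset of points of ℝ^m. -/
def toDataset {m k : ℕ} (X : Fin k → EuclideanSpace ℝ (Fin m)) :
    Multiset (EuclideanSpace ℝ (Fin m)) := (List.ofFn X : List (EuclideanSpace ℝ (Fin m)))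

/-! The orthogonal projection onto `N` moves every point closer to every point of `N`, hence,
by the replacement axiom applied one point at a time, projecting a dataset onto `N` does not
increase its distance to `T ⊆ N`. A projected minimizer is therefore again a minimizer. -/

theorem Submodule.norm_starProjection_sub_le {𝕜 E : Type*} [RCLike 𝕜] [NormedAddCommGroup E]
    [InnerProductSpace 𝕜 E] (K : Submodule 𝕜 E) [K.HasOrthogonalProjection] (v : E) {x : E}
    (hx : x ∈ K) : ‖K.starProjection v - x‖ ≤ ‖v - x‖ :=
  calc ‖K.starProjection v - x‖ = ‖K.starProjection (v - x)‖ := by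
        rw [map_sub, K.starProjection_eq_self_iff.mpr hx]
    _ ≤ ‖v - x‖ := K.norm_starProjection_apply_le _

theorem toDataset_comp {m k : ℕ} (f : EuclideanSpace ℝ (Fin m) → EuclideanSpace ℝ (Fin m))
    (X : Fin k → EuclideanSpace ℝ (Fin m)) :
    toDataset (f ∘ X) = (toDataset X).map f := by
  rw [toDataset, toDataset, Multiset.map_coe, List.map_ofFn]

namespace IsDatasetDistance

variable {m : ℕ} {D : Multiset (EuclideanSpace ℝ (Fin m)) → Multiset (EuclideanSpace ℝ (Fin m)) → ℝ}
  {T : Multiset (EuclideanSpace ℝ (Fin m))} {f : EuclideanSpace ℝ (Fin m) → EuclideanSpace ℝ (Fin m)}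

theorem map_add_le (hD : IsDatasetDistance D) (hf : ∀ d, ∀ x ∈ T, ‖f d - x‖ ≤ ‖d - x‖)
    (X Y : Multiset (EuclideanSpace ℝ (Fin m))) : D (X.map f + Y) T ≤ D (X + Y) T := by
  induction X using Multiset.induction generalizing Y with
  | empty => simp
  | cons a X ih =>
    calc D ((a ::ₘ X).map f + Y) T = D (f a ::ₘ (a ::ₘ (X.map f + Y)).erase a) T := by
          rw [Multiset.erase_cons_head, Multiset.map_cons, Multiset.cons_add]
      _ ≤ D (a ::ₘ (X.map f + Y)) T :=
          hD.replace _ T a (f a) (Multiset.mem_cons_self _ _) (hf a)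
      _ = D (X.map f + a ::ₘ Y) T := by rw [Multiset.add_cons]
      _ ≤ D (X + a ::ₘ Y) T := ih _
      _ = D (a ::ₘ X + Y) T := by rw [Multiset.add_cons, Multiset.cons_add]

theorem map_le (hD : IsDatasetDistance D) (hf : ∀ d, ∀ x ∈ T, ‖f d - x‖ ≤ ‖d - x‖)
    (X : Multiset (EuclideanSpace ℝ (Fin m))) : D (X.map f) T ≤ D X T := by
  simpa using hD.map_add_le hf X 0

end IsDatasetDistance

/-- if `D(·, T)` attains its minimum over datasets of size `n`, then there exists a
minimizer all of whose points lie in the subspace `N` (which contains all points of `T`). -/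
theorem stmt_4 {m n : ℕ}
    (N : Submodule ℝ (EuclideanSpace ℝ (Fin m)))
    (T : Multiset (EuclideanSpace ℝ (Fin m))) (hT : ∀ t ∈ T, t ∈ N)
    (D : Multiset (EuclideanSpace ℝ (Fin m)) → Multiset (EuclideanSpace ℝ (Fin m)) → ℝ)
    (hD : IsDatasetDistance D)
    (hmin : ∃ Sstar : Fin n → EuclideanSpace ℝ (Fin m),
      ∀ S : Fin n → EuclideanSpace ℝ (Fin m), D (toDataset Sstar) T ≤ D (toDataset S) T) :
    ∃ Sbar : Fin n → EuclideanSpace ℝ (Fin m), (∀ i, Sbar i ∈ N) ∧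
      ∀ S : Fin n → EuclideanSpace ℝ (Fin m), D (toDataset Sbar) T ≤ D (toDataset S) T := by
  obtain ⟨Sstar, hSstar⟩ := hmin
  refine ⟨N.starProjection ∘ Sstar, fun i => N.starProjection_apply_mem (Sstar i), fun S => ?_⟩
  calc D (toDataset (N.starProjection ∘ Sstar)) T
      = D ((toDataset Sstar).map N.starProjection) T := by rw [toDataset_comp]
    _ ≤ D (toDataset Sstar) T :=
        hD.map_le (fun d x hx => N.norm_starProjection_sub_le d (hT x hx)) _
    _ ≤ D (toDataset S) T := hSstar S
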